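/- Let ℓ ∈ ℕ and let A := [I_ℓ; 1_ℓᵀ] ∈ ℝ^{(ℓ+1)×ℓ} be the ℓ×ℓ identity matrix stacked on top of the all-ones row vector of length ℓ. Consider the set F of real symmetric positive semidefinite (ℓ+1)×(ℓ+1) matrices X satisfying X_{ii} = 1 for all i ∈ {1,...,ℓ+1} and AᵀXA = I_ℓ + 1_ℓ1_ℓᵀ. Then the identity matrix I_{ℓ+1} belongs to F, and every X ∈ F has rank exactly ℓ+1. -/
import Mathlib


open Matrix

noncomputable section

/-- The `(ℓ+1)×ℓ` matrix `A = [I_ℓ; 1_ℓᵀ]`: the identity stacked on top of the all-ones row. -/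
def Amat (l : ℕ) : Matrix (Fin (l+1)) (Fin l) ℝ :=
  Matrix.of fun i j => if (i : ℕ) = (j : ℕ) ∨ (i : ℕ) = l then 1 else 0

/-- Membership in the feasible set `F`: `X` is a symmetric PSD `(ℓ+1)×(ℓ+1)` matrix with unit
diagonal and `AᵀXA = I_ℓ + 1_ℓ1_ℓᵀ`. -/
def Ffeas (l : ℕ) (X : Matrix (Fin (l+1)) (Fin (l+1)) ℝ) : Prop :=
  X.PosSemidef ∧ (∀ i, X i i = 1) ∧
  (Amat l)ᵀ * X * (Amat l) = 1 + Matrix.of (fun _ _ : Fin l => (1:ℝ))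

lemma sum_amat (l : ℕ) (j : Fin l) (v : Fin (l+1) → ℝ) :
    ∑ i, Amat l i j * v i = v j.castSucc + v (Fin.last l) := by
  have h : ∀ i : Fin (l+1), Amat l i j * v i =
      (if i = j.castSucc then v i else 0) + (if i = Fin.last l then v i else 0) := by
    intro i
    have hj : (j : ℕ) < l := j.isLt
    simp only [Amat, Matrix.of_apply]
    by_cases h1 : i = j.castSucc <;> by_cases h2 : i = Fin.last l <;>
      simp_all [Fin.ext_iff, Fin.coe_castSucc, Fin.val_last] <;> omega
  rw [Finset.sum_congr rfl (fun i _ => h i), Finset.sum_add_distrib]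
  simp

lemma Amat_entry (l : ℕ) (X : Matrix (Fin (l+1)) (Fin (l+1)) ℝ) (j k : Fin l) :
    ((Amat l)ᵀ * X * Amat l) j k =
      X j.castSucc k.castSucc + X j.castSucc (Fin.last l)
        + X (Fin.last l) k.castSucc + X (Fin.last l) (Fin.last l) := by
  have hcol : ∀ m, ((Amat l)ᵀ * X) j m = X j.castSucc m + X (Fin.last l) m := by
    intro m
    rw [Matrix.mul_apply]
    simpa [Matrix.transpose_apply] using sum_amat l j (fun i => X i m)
  rw [Matrix.mul_apply]
  calc ∑ i, ((Amat l)ᵀ * X) j i * Amat l i k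
      = ∑ i, Amat l i k * ((Amat l)ᵀ * X) j i := by
        exact Finset.sum_congr rfl fun i _ => mul_comm _ _
    _ = ((Amat l)ᵀ * X) j k.castSucc + ((Amat l)ᵀ * X) j (Fin.last l) :=
        sum_amat l k (fun i => ((Amat l)ᵀ * X) j i)
    _ = _ := by rw [hcol, hcol]; ring

lemma castSucc_ne_last {l : ℕ} (j : Fin l) : j.castSucc ≠ Fin.last l := by
  simp [Fin.ext_iff, Fin.coe_castSucc, Fin.val_last]
  omega

lemma Ffeas_eq_one (l : ℕ) (X : Matrix (Fin (l+1)) (Fin (l+1)) ℝ) (hX : Ffeas l X) :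
    X = 1 := by
  obtain ⟨hpsd, hdiag, heq⟩ := hX
  have hsym : ∀ a b, X a b = X b a := by
    intro a b
    have := hpsd.1.apply b a
    simpa using this
  have hent : ∀ j k : Fin l,
      X j.castSucc k.castSucc + X j.castSucc (Fin.last l)
        + X (Fin.last l) k.castSucc + X (Fin.last l) (Fin.last l)
      = (if j = k then (1:ℝ) else 0) + 1 := by
    intro j k
    have := congrFun (congrFun heq j) k
    rw [Amat_entry] at this
    simpa [Matrix.one_apply, Matrix.add_apply] using this
  have hzero : ∀ j : Fin l, X j.castSucc (Fin.last l) = 0 := by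
    intro j
    have h := hent j j
    rw [hdiag, hdiag, hsym (Fin.last l) j.castSucc] at h
    simp at h
    linarith
  have hoff : ∀ j k : Fin l, X j.castSucc k.castSucc = if j = k then (1:ℝ) else 0 := by
    intro j k
    have h := hent j k
    rw [hdiag, hzero j, hsym (Fin.last l) k.castSucc, hzero k] at h
    linarith [h]
  ext i i'
  refine Fin.lastCases ?_ (fun j => ?_) i
  · refine Fin.lastCases ?_ (fun k => ?_) i'
    · rw [hdiag]
      simp [Matrix.one_apply]
    · rw [hsym, hzero k]
      exact (Matrix.one_apply_ne (Ne.symm (castSucc_ne_last k))).symm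
  · refine Fin.lastCases ?_ (fun k => ?_) i'
    · rw [hzero j]
      simp [Matrix.one_apply, castSucc_ne_last j]
    · rw [hoff j k]
      simp [Matrix.one_apply, Fin.castSucc_inj]

/-- The identity matrix belongs to `F`, and every member of `F` has rank exactly `ℓ+1`. -/
theorem Ffeas_id_mem_and_rank (l : ℕ) :
    Ffeas l 1 ∧ ∀ X, Ffeas l X → X.rank = l + 1 := by
  constructor
  · refine ⟨Matrix.PosSemidef.one, fun i => Matrix.one_apply_eq i, ?_⟩
    ext j k
    rw [Amat_entry]
    simp [Matrix.one_apply, Fin.castSucc_inj, castSucc_ne_last,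
      (castSucc_ne_last k).symm, Matrix.add_apply]
  · intro X hX
    rw [Ffeas_eq_one l X hX, Matrix.rank_one]
    simp
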